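/- arXiv:2008.11448 — 4 statements merged into one kernel-verified Lean document; each statement's English description precedes it below -/
import Mathlib

section
/- For a uniformly random permutation σ of Z/nZ, any j ∈ Z/nZ and any k with 2 ≤ n − k, the probability that exactly k elements i satisfy i − σ(i) = j (mod n) is strictly greater than 1/(2·e·k!). -/
/-!
Writing `τ` for the shift `i ↦ i - j`, the condition `i - σ i = j` reads `σ i = τ i`, i.e. `i` is a
fixed point of `τ⁻¹ * σ`. Hence the permutations in question are in bijection with those having
exactly `k` fixed points: `C(n, k)` choices of the fixed set times `D_{n-k}` derangements of its
complement, so the probability is `D_m / (k! · m!)` with `m = n - k`. The recurrence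
`D_{m+2} = (m+1)(D_m + D_{m+1})` propagates `m! ≤ 3 D_m` from `m = 2, 3` upwards, and `3 < 2e`.
-/

open Finset Equiv Nat

section

variable {α : Type*} [Fintype α] [DecidableEq α]

theorem card_perm_filter_fixed_eq (S : Finset α) :
    #{σ : Perm α | ({i | σ i = i} : Finset α) = S} = numDerangements (Fintype.card α - #S) := by
  have hfix : ∀ σ : Perm α,
      ({i | σ i = i} : Finset α) = S ↔ ∀ a, ¬a ∉ S ↔ a ∈ Function.fixedPoints σ := by
    intro σ
    simp only [not_not, Function.mem_fixedPoints, Function.IsFixedPt, Finset.ext_iff, mem_filter,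
      mem_univ, true_and]
    exact forall_congr' fun a => Iff.comm
  rw [← Fintype.card_subtype, Fintype.card_congr ((Equiv.subtypeEquivRight hfix).trans
    (derangements.subtypeEquiv (· ∉ S)).symm), card_derangements_eq_numDerangements,
    Fintype.card_subtype_compl, Fintype.card_coe]

theorem card_perm_filter_card_fixed_eq (k : ℕ) :
    #{σ : Perm α | #{i | σ i = i} = k} =
      (Fintype.card α).choose k * numDerangements (Fintype.card α - k) := by
  rw [card_eq_sum_card_fiberwise (f := fun σ : Perm α => ({i | σ i = i} : Finset α))
    (t := powersetCard k univ) (fun σ hσ => by simpa using hσ)]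
  rw [sum_congr rfl fun S hS => ?_, sum_const, card_powersetCard, Finset.card_univ, smul_eq_mul]
  rw [mem_powersetCard_univ] at hS
  rw [filter_filter, ← hS, ← card_perm_filter_fixed_eq]
  congr 1
  ext σ
  simp +contextual

theorem card_perm_filter_card_apply_eq (τ : Perm α) (k : ℕ) :
    #{σ : Perm α | #{i | σ i = τ i} = k} = #{σ : Perm α | #{i | σ i = i} = k} := by
  refine card_equiv (Equiv.mulLeft τ⁻¹) fun σ => ?_
  simp [symm_apply_eq]

end

theorem factorial_le_three_mul_numDerangements {m : ℕ} (hm : 2 ≤ m) :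
    m ! ≤ 3 * numDerangements m := by
  suffices ∀ l, (l + 2)! ≤ 3 * numDerangements (l + 2) ∧
      (l + 3)! ≤ 3 * numDerangements (l + 3) by
    obtain ⟨l, rfl⟩ := Nat.exists_eq_add_of_le' hm
    exact (this l).1
  intro l
  induction l with
  | zero => decide
  | succ l ih =>
    refine ⟨ih.2, ?_⟩
    have hfac : (l + 4)! = (l + 3) * ((l + 2)! + (l + 3)!) := by
      simp only [factorial_succ]; ring
    rw [hfac, numDerangements_add_two]
    nlinarith [ih.1, ih.2]

theorem one_div_two_mul_exp_one_lt_numDerangements_div_factorial {m : ℕ} (hm : 2 ≤ m) :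
    1 / (2 * Real.exp 1) < numDerangements m / (m ! : ℝ) := by
  have h3 : (m ! : ℝ) ≤ 3 * numDerangements m := by
    exact_mod_cast factorial_le_three_mul_numDerangements hm
  have he : (3 : ℝ) < 2 * Real.exp 1 := by linarith [Real.add_one_lt_exp one_ne_zero]
  have hpos : (0 : ℝ) < m ! := by positivity
  rw [div_lt_div_iff₀ (by positivity) (by positivity)]
  nlinarith

theorem prob_shift_count_gt (n : ℕ) [NeZero n] (j : ZMod n) (k : ℕ) (hk : 2 ≤ n - k) :
    ((Finset.univ.filter
        (fun σ : Equiv.Perm (ZMod n) =>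
          (Finset.univ.filter (fun i : ZMod n => i - σ i = j)).card = k)).card : ℝ) /
      (Nat.factorial n : ℝ) >
    1 / (2 * Real.exp 1 * (Nat.factorial k : ℝ)) := by
  have hshift : ∀ (σ : Perm (ZMod n)) i, i - σ i = j ↔ σ i = Equiv.subRight j i := by
    intro σ i
    rw [Equiv.subRight_apply, sub_eq_iff_eq_add', eq_sub_iff_add_eq, eq_comm]
  have hcount : #{σ : Perm (ZMod n) | #{i | i - σ i = j} = k} =
      n.choose k * numDerangements (n - k) := by
    simp_rw [hshift, card_perm_filter_card_apply_eq, card_perm_filter_card_fixed_eq, ZMod.card]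
  have hfac : (n ! : ℝ) = n.choose k * (k ! * (n - k)!) := by
    rw [← mul_assoc]; exact_mod_cast (choose_mul_factorial_mul_factorial (by omega)).symm
  have hchoose : (0 : ℝ) < n.choose k := by exact_mod_cast choose_pos (by omega)
  rw [hcount, hfac, gt_iff_lt, Nat.cast_mul, mul_div_mul_left _ _ hchoose.ne', mul_comm (k ! : ℝ),
    ← div_div (numDerangements (n - k) : ℝ), ← div_div (1 : ℝ) (2 * Real.exp 1)]
  exact div_lt_div_of_pos_right
    (one_div_two_mul_exp_one_lt_numDerangements_div_factorial hk) (by positivity)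
end

section
/- Let s ∈ Z/nZ be nonzero, and let I, J be compatible for shift s (i.e., I, J, I−s, J+s pairwise disjoint). Then the set Φ_{0,s}(I,J) of permutations σ of Z/nZ with σ(i) = i for all i ∈ I and σ(j) = j + s for all j ∈ J is nonempty. -/
/-- `I` and `J` are compatible for shift `s`: the sets `I`, `J`, `I - s`, `J + s`
are pairwise disjoint. -/
def Compatible {n : ℕ} (I J : Finset (ZMod n)) (s : ZMod n) : Prop :=
  Disjoint I J ∧ Disjoint I (I.image (· - s)) ∧ Disjoint I (J.image (· + s)) ∧
  Disjoint J (I.image (· - s)) ∧ Disjoint J (J.image (· + s)) ∧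
  Disjoint (I.image (· - s)) (J.image (· + s))

theorem exists_perm_fixing_and_shifting (n : ℕ) [NeZero n] (s : ZMod n) (hs : s ≠ 0)
    (I J : Finset (ZMod n)) (hcomp : Compatible I J s) :
    ∃ σ : Equiv.Perm (ZMod n), (∀ i ∈ I, σ i = i) ∧ (∀ j ∈ J, σ j = j + s) := by
  classical
  obtain ⟨h1, h2, h3, h4, h5, h6⟩ := hcomp
  set T : Finset (ZMod n) := I ∪ J.image (· + s) with hT
  have hmem : ∀ x : ZMod n, x ∈ I ∪ J → (if x ∈ I then x else x + s) ∈ T := by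
    intro x hx
    by_cases h : x ∈ I
    · simp [T, h]
    · have hxJ : x ∈ J := (Finset.mem_union.1 hx).resolve_left h
      simp only [if_neg h, hT, Finset.mem_union]
      exact Or.inr (Finset.mem_image.2 ⟨x, hxJ, rfl⟩)
  have hbij : Function.Bijective
      (fun x : {x // x ∈ I ∪ J} => (⟨if (x : ZMod n) ∈ I then x else x + s,
        hmem x x.2⟩ : {x // x ∈ T})) := by
    constructor
    · rintro ⟨a, ha⟩ ⟨b, hb⟩ hab
      simp only [Subtype.mk.injEq] at hab ⊢
      by_cases haI : a ∈ I <;> by_cases hbI : b ∈ I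
      · simpa [haI, hbI] using hab
      · rw [if_pos haI, if_neg hbI] at hab
        have hbJ : b ∈ J := (Finset.mem_union.1 hb).resolve_left hbI
        exact absurd (Finset.mem_image.2 ⟨b, hbJ, hab.symm⟩)
          (Finset.disjoint_right.1 h3 · haI)
      · rw [if_neg haI, if_pos hbI] at hab
        have haJ : a ∈ J := (Finset.mem_union.1 ha).resolve_left haI
        exact absurd (Finset.mem_image.2 ⟨a, haJ, hab⟩)
          (Finset.disjoint_right.1 h3 · hbI)
      · rw [if_neg haI, if_neg hbI] at hab
        exact add_right_cancel hab
    · rintro ⟨y, hy⟩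
      rcases Finset.mem_union.1 hy with hyI | hyJ
      · exact ⟨⟨y, Finset.mem_union_left _ hyI⟩, by simp [hyI]⟩
      · obtain ⟨j, hj, rfl⟩ := Finset.mem_image.1 hyJ
        have hjI : j ∉ I := fun h => Finset.disjoint_left.1 h1 h hj
        exact ⟨⟨j, Finset.mem_union_right _ hj⟩, by simp [hjI]⟩
  let e := Equiv.ofBijective _ hbij
  refine ⟨e.extendSubtype, ?_, ?_⟩
  · intro i hi
    have := e.extendSubtype_apply_of_mem i (Finset.mem_union_left _ hi)
    rw [this]
    simp [e, Equiv.ofBijective, hi]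
  · intro j hj
    have hjI : j ∉ I := fun h => Finset.disjoint_left.1 h1 h hj
    have := e.extendSubtype_apply_of_mem j (Finset.mem_union_right _ hj)
    rw [this]
    simp [e, Equiv.ofBijective, hjI]
end

section
/- Fix a nonzero s ∈ Z/nZ and t with 6t ≤ n. If a pair of disjoint t-element sets I, J ⊆ Z/nZ is chosen uniformly at random, the probability that I and J are compatible for shift s (i.e., I, J, I−s, J+s are pairwise disjoint) is at least (1 − 4t/(n−2t))^{2t}. Equivalently, the number of ordered pairs of disjoint t-subsets compatible for s is at least (1 − 4t/(n−2t))^{2t} · C(n,t)·C(n−t,t). -/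
instance {n : ℕ} (I J : Finset (ZMod n)) (s : ZMod n) : Decidable (Compatible I J s) := by
  unfold Compatible; infer_instance

/-!
Grow a compatible pair one point at a time. Inserting `x` into `I` keeps `(I, J)` compatible
unless `x` lies in `I ∪ (I - s) ∪ (I + s) ∪ J ∪ (J + s) ∪ (J + 2s)`, a set of at most
`3 (|I| + |J|)` points; the symmetry `(I, J, s) ↦ (J, I, -s)` does the same for `J`. Writing
`A(k,l)` for the compatible pairs with `|I| = k`, `|J| = l`, double counting (smaller pair, larger
pair) gives `|A(k,l)| (n - 3(k+l)) ≤ |A(k+1,l)| (k+1)`, and `2t` such steps give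
`∏_{i<2t} (n - 3i) ≤ |A(t,t)| t!²`. Since `∏_{i<2t} (n - i) = t!² C(n,t) C(n-t,t)`, it remains that `(1 - 4t/(n-2t)) (n - i) ≤ n - 3i` for `i ≤ 2t`.
-/

open Finset
open scoped Nat

namespace Compatible

variable {n : ℕ} {I J : Finset (ZMod n)} {s : ZMod n}

theorem swap_neg (h : Compatible I J s) : Compatible J I (-s) := by
  simp only [Compatible, sub_eq_add_neg, neg_neg] at h ⊢
  obtain ⟨h₁, h₂, h₃, h₄, h₅, h₆⟩ := h
  exact ⟨h₁.symm, h₅, h₄, h₃, h₂, h₆.symm⟩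

theorem comm_neg : Compatible J I (-s) ↔ Compatible I J s :=
  ⟨fun h => by simpa using h.swap_neg, swap_neg⟩

end Compatible

theorem card_union_image_union_image_le {α : Type*} [DecidableEq α] (A : Finset α) (f g : α → α) :
    #(A ∪ A.image f ∪ A.image g) ≤ 3 * #A := by
  have := card_union_le (A ∪ A.image f) (A.image g)
  have := card_union_le A (A.image f)
  have := card_image_le (s := A) (f := f)
  have := card_image_le (s := A) (f := g)
  omega

section Blocked

variable {n : ℕ}

def blockedLeft (I J : Finset (ZMod n)) (s : ZMod n) : Finset (ZMod n) :=
  (I ∪ I.image (· - s) ∪ I.image (· + s)) ∪ (J ∪ J.image (· + s) ∪ J.image (· + s + s))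

theorem subset_blockedLeft {I J : Finset (ZMod n)} {s : ZMod n} : I ⊆ blockedLeft I J s :=
  subset_union_left.trans (subset_union_left.trans subset_union_left)

theorem card_blockedLeft_le (I J : Finset (ZMod n)) (s : ZMod n) :
    #(blockedLeft I J s) ≤ 3 * (#I + #J) := by
  have := card_union_le (I ∪ I.image (· - s) ∪ I.image (· + s))
    (J ∪ J.image (· + s) ∪ J.image (· + s + s))
  have := card_union_image_union_image_le I (· - s) (· + s)
  have := card_union_image_union_image_le J (· + s) (· + s + s)
  unfold blockedLeft
  omega

theorem Compatible.insert_left {I J : Finset (ZMod n)} {s x : ZMod n} (hs : s ≠ 0)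
    (h : Compatible I J s) (hx : x ∉ blockedLeft I J s) : Compatible (insert x I) J s := by
  simp only [blockedLeft, mem_union, mem_image, not_or, not_exists, not_and] at hx
  obtain ⟨⟨⟨hxI, hxI_sub⟩, hxI_add⟩, ⟨hxJ, hxJ_add⟩, hxJ_add₂⟩ := hx
  obtain ⟨h₁, h₂, h₃, h₄, h₅, h₆⟩ := h
  simp only [Compatible, image_insert, disjoint_insert_left,
    disjoint_insert_right, mem_insert, mem_image, not_or, not_exists, not_and]
  exact ⟨⟨hxJ, h₁⟩, ⟨⟨sub_eq_self.not.mpr hs, fun hI => hxI_add _ hI (sub_add_cancel x s)⟩,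
    hxI_sub, h₂⟩, ⟨hxJ_add, h₃⟩, ⟨fun hJ => hxJ_add _ hJ (sub_add_cancel x s), h₄⟩, h₅,
    fun a ha he => hxJ_add₂ a ha (by rw [he, sub_add_cancel]), h₆⟩

end Blocked

theorem mul_prod_le_mul_factorial {f c : ℕ → ℕ} (h : ∀ i, f i * c i ≤ f (i + 1) * (i + 1))
    (m : ℕ) : f 0 * ∏ i ∈ range m, c i ≤ f m * m ! := by
  induction m with
  | zero => simp
  | succ m ih =>
    calc f 0 * ∏ i ∈ range (m + 1), c i = f 0 * (∏ i ∈ range m, c i) * c m := by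
          rw [prod_range_succ, mul_assoc]
      _ ≤ f m * m ! * c m := by gcongr
      _ = f m * c m * m ! := by ring
      _ ≤ f (m + 1) * (m + 1) * m ! := Nat.mul_le_mul_right _ (h m)
      _ = f (m + 1) * (m + 1)! := by rw [Nat.factorial_succ]; ring

section Counting

variable {n : ℕ} [NeZero n]

def compatiblePairs (s : ZMod n) (k l : ℕ) : Finset (Finset (ZMod n) × Finset (ZMod n)) :=
  univ.filter fun p => #p.1 = k ∧ #p.2 = l ∧ Compatible p.1 p.2 s

theorem mem_compatiblePairs {s : ZMod n} {k l : ℕ} {p : Finset (ZMod n) × Finset (ZMod n)} :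
    p ∈ compatiblePairs s k l ↔ #p.1 = k ∧ #p.2 = l ∧ Compatible p.1 p.2 s := by
  simp [compatiblePairs]

theorem card_compatiblePairs_zero_zero (s : ZMod n) : #(compatiblePairs s 0 0) = 1 := by
  refine card_eq_one.mpr ⟨(∅, ∅), ?_⟩
  ext ⟨I, J⟩
  simp only [mem_compatiblePairs, card_eq_zero, mem_singleton, Prod.mk.injEq]
  constructor
  · exact fun h => ⟨h.1, h.2.1⟩
  · rintro ⟨rfl, rfl⟩
    simp [Compatible]

theorem card_compatiblePairs_neg (s : ZMod n) (k l : ℕ) :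
    #(compatiblePairs (-s) l k) = #(compatiblePairs s k l) := by
  refine card_nbij' Prod.swap Prod.swap (fun p hp => ?_) (fun p hp => ?_) (fun p _ => p.swap_swap)
    (fun p _ => p.swap_swap)
  · rw [mem_coe, mem_compatiblePairs] at hp ⊢
    exact ⟨hp.2.1, hp.1, Compatible.comm_neg.mp hp.2.2⟩
  · rw [mem_coe, mem_compatiblePairs] at hp ⊢
    exact ⟨hp.2.1, hp.1, Compatible.comm_neg.mpr hp.2.2⟩

variable {s : ZMod n}

theorem card_compatiblePairs_mul_le_succ_left (hs : s ≠ 0) (k l : ℕ) :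
    #(compatiblePairs s k l) * (n - 3 * (k + l)) ≤ #(compatiblePairs s (k + 1) l) * (k + 1) := by
  refine card_mul_le_card_mul (fun p q => p.2 = q.2 ∧ p.1 ⊆ q.1) ?_ ?_
  · rintro ⟨I, J⟩ hp
    rw [mem_compatiblePairs] at hp
    obtain ⟨hI, hJ, hIJ⟩ := hp
    have hfree : n - 3 * (k + l) ≤ #(univ \ blockedLeft I J s) := by
      rw [card_sdiff_of_subset (subset_univ _), card_univ, ZMod.card, ← hI, ← hJ]
      exact Nat.sub_le_sub_left (card_blockedLeft_le I J s) n
    have hfree_I : ∀ x ∈ univ \ blockedLeft I J s, x ∉ I := fun x hx hxI =>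
      (mem_sdiff.mp hx).2 (subset_blockedLeft hxI)
    refine hfree.trans (card_le_card_of_injOn (fun x => (insert x I, J)) (fun x hx => ?_) ?_)
    · rw [mem_coe, mem_bipartiteAbove, mem_compatiblePairs]
      refine ⟨⟨?_, hJ, hIJ.insert_left hs (mem_sdiff.mp hx).2⟩, rfl, subset_insert x I⟩
      rw [card_insert_of_notMem (hfree_I x hx), hI]
    · intro x hx y _ hxy
      exact (insert_inj (hfree_I x hx)).mp (congrArg Prod.fst hxy)
  · rintro ⟨I, J⟩ hq
    rw [mem_compatiblePairs] at hq
    calc #((compatiblePairs s k l).bipartiteBelow _ (I, J)) ≤ #(I.powersetCard k) := by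
          refine card_le_card_of_injOn Prod.fst (fun p hp => ?_) ?_
          · rw [mem_coe, mem_bipartiteBelow, mem_compatiblePairs] at hp
            exact mem_powersetCard.mpr ⟨hp.2.2, hp.1.1⟩
          · intro p hp p' hp' hpp'
            rw [mem_coe, mem_bipartiteBelow] at hp hp'
            exact Prod.ext hpp' (hp.2.1.trans hp'.2.1.symm)
      _ = k + 1 := by rw [card_powersetCard, hq.1, Nat.choose_succ_self_right]

theorem card_compatiblePairs_mul_le_succ_right (hs : s ≠ 0) (k l : ℕ) :
    #(compatiblePairs s k l) * (n - 3 * (k + l)) ≤ #(compatiblePairs s k (l + 1)) * (l + 1) := by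
  rw [← card_compatiblePairs_neg s k l, ← card_compatiblePairs_neg s k (l + 1), add_comm k]
  exact card_compatiblePairs_mul_le_succ_left (neg_ne_zero.mpr hs) l k

theorem prod_sub_le_card_compatiblePairs_mul (hs : s ≠ 0) (t : ℕ) :
    ∏ i ∈ range (2 * t), (n - 3 * i) ≤ #(compatiblePairs s t t) * (t ! * t !) := by
  have hleft := mul_prod_le_mul_factorial (f := fun k => #(compatiblePairs s k 0))
    (c := fun i => n - 3 * i) (fun k => card_compatiblePairs_mul_le_succ_left hs k 0) t
  have hright := mul_prod_le_mul_factorial (f := fun l => #(compatiblePairs s t l))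
    (c := fun i => n - 3 * (t + i)) (fun l => card_compatiblePairs_mul_le_succ_right hs t l) t
  rw [card_compatiblePairs_zero_zero, one_mul] at hleft
  calc ∏ i ∈ range (2 * t), (n - 3 * i)
      = (∏ i ∈ range t, (n - 3 * i)) * ∏ i ∈ range t, (n - 3 * (t + i)) := by
        rw [two_mul, prod_range_add]
    _ ≤ #(compatiblePairs s t 0) * t ! * ∏ i ∈ range t, (n - 3 * (t + i)) := by gcongr
    _ = #(compatiblePairs s t 0) * (∏ i ∈ range t, (n - 3 * (t + i))) * t ! := by ring
    _ ≤ #(compatiblePairs s t t) * t ! * t ! := by gcongr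
    _ = #(compatiblePairs s t t) * (t ! * t !) := by ring

end Counting

theorem one_sub_div_mul_sub_le {n t i : ℝ} (ht : 6 * t ≤ n) (ht₀ : 0 ≤ t) (hi : i ≤ 2 * t) :
    (1 - 4 * t / (n - 2 * t)) * (n - i) ≤ n - 3 * i := by
  rcases ht₀.eq_or_lt with rfl | ht₀
  · simp only [mul_zero, zero_div, sub_zero, one_mul]
    linarith
  have hD : 0 < n - 2 * t := by linarith
  have : 4 * t ≤ 4 * t / (n - 2 * t) * (n - i) := by
    rw [div_mul_eq_mul_div, le_div_iff₀ hD]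
    nlinarith
  nlinarith

theorem pow_mul_choose_mul_choose_mul_le {n t : ℕ} (ht : 6 * t ≤ n) :
    (1 - 4 * t / (n - 2 * t : ℝ)) ^ (2 * t) * n.choose t * (n - t).choose t * (t ! * t !) ≤
      ∏ i ∈ range (2 * t), ((n - 3 * i : ℕ) : ℝ) := by
  have hdesc : n.choose t * (n - t).choose t * (t ! * t !) = ∏ i ∈ range (2 * t), (n - i) := by
    rw [← Nat.descFactorial_eq_prod_range, ← Nat.descFactorial_mul_descFactorial (k := t) (by omega),
      Nat.descFactorial_eq_factorial_mul_choose, Nat.descFactorial_eq_factorial_mul_choose,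
      show 2 * t - t = t by omega]
    ring
  have hcast : (6 * t : ℝ) ≤ n := by exact_mod_cast ht
  have hδ : 0 ≤ 1 - 4 * t / (n - 2 * t : ℝ) := by
    rw [sub_nonneg]
    exact div_le_one_of_le₀ (by linarith) (by linarith)
  calc (1 - 4 * t / (n - 2 * t : ℝ)) ^ (2 * t) * n.choose t * (n - t).choose t * (t ! * t !)
      = (1 - 4 * t / (n - 2 * t : ℝ)) ^ (2 * t) * ∏ i ∈ range (2 * t), ((n - i : ℕ) : ℝ) := by
        rw [mul_assoc, mul_assoc, ← Nat.cast_prod, ← hdesc]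
        push_cast
        ring
    _ = ∏ i ∈ range (2 * t), ((1 - 4 * t / (n - 2 * t : ℝ)) * ((n - i : ℕ) : ℝ)) := by
        rw [prod_mul_distrib, prod_const, card_range]
    _ ≤ ∏ i ∈ range (2 * t), ((n - 3 * i : ℕ) : ℝ) := by
        refine prod_le_prod (fun i _ => by positivity) fun i hi => ?_
        have hi : i < 2 * t := mem_range.mp hi
        rw [Nat.cast_sub (by omega), Nat.cast_sub (by omega)]
        push_cast
        exact one_sub_div_mul_sub_le hcast (Nat.cast_nonneg t) (by exact_mod_cast hi.le)

theorem card_compatible_pairs_ge (n t : ℕ) [NeZero n] (s : ZMod n) (hs : s ≠ 0)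
    (ht : 6 * t ≤ n) :
    ((Finset.univ.filter
      (fun p : Finset (ZMod n) × Finset (ZMod n) =>
        p.1.card = t ∧ p.2.card = t ∧ Disjoint p.1 p.2 ∧
          Compatible p.1 p.2 s)).card : ℝ) ≥
    (1 - 4 * t / (n - 2 * t : ℝ)) ^ (2 * t) *
      (Nat.choose n t : ℝ) * (Nat.choose (n - t) t : ℝ) := by
  have hpairs : univ.filter (fun p : Finset (ZMod n) × Finset (ZMod n) =>
      #p.1 = t ∧ #p.2 = t ∧ Disjoint p.1 p.2 ∧ Compatible p.1 p.2 s) = compatiblePairs s t t :=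
    filter_congr fun p _ => and_congr_right' (and_congr_right' (and_iff_right_of_imp And.left))
  rw [hpairs, ge_iff_le, ← mul_le_mul_iff_of_pos_right (by positivity : (0 : ℝ) < t ! * t !)]
  calc _ ≤ ∏ i ∈ range (2 * t), ((n - 3 * i : ℕ) : ℝ) := pow_mul_choose_mul_choose_mul_le ht
    _ ≤ _ := by exact_mod_cast prod_sub_le_card_compatiblePairs_mul hs t
end

section
/- Let s ∈ Z/nZ be nonzero, let I, J be compatible for shift s, and let K ⊆ Z/nZ satisfy K ∩ (K+s) = ∅ and K ∩ (I ∪ J ∪ (I−s) ∪ (J+s)) = ∅ (K feasible for I, J, s). Then the number of permutations σ of Z/nZ with σ(i) = i for all i ∈ I, σ(j) = j + s for all j ∈ J, and σ(k) ∈ {k, k+s} for all k ∈ K, equals 2^{|K|} · (n − |I ∪ J ∪ K|)!. -/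
/-- `K` is feasible for `I`, `J`, `s`. -/
def Feasible {n : ℕ} (I J K : Finset (ZMod n)) (s : ZMod n) : Prop :=
  Disjoint K (K.image (· + s)) ∧
  Disjoint K (I ∪ J ∪ I.image (· - s) ∪ J.image (· + s))

open Finset Equiv
open scoped Nat

section PermCount

variable {α : Type*} [Fintype α] [DecidableEq α]

theorem Equiv.Perm.card_filter_forall_mem_eq_self (A : Finset α) :
    #{σ : Perm α | ∀ a ∈ A, σ a = a} = (Fintype.card α - #A)! := by
  rw [← Fintype.card_subtype, ← Fintype.card_coe A, ← Fintype.card_subtype_compl,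
    ← Fintype.card_perm]
  refine Fintype.card_congr ((Perm.subtypeEquivSubtypePerm (· ∉ A)).trans
    (subtypeEquivRight fun σ => ?_)).symm
  simp

theorem Equiv.Perm.card_filter_forall_mem_eq (A : Finset α) {f : α → α} (hf : Set.InjOn f A) :
    #{σ : Perm α | ∀ a ∈ A, σ a = f a} = (Fintype.card α - #A)! := by
  obtain ⟨τ, hτ⟩ := Perm.exists_extending_pair (fun a : A => (a : α)) (fun a : A => f a)
    Subtype.val_injective fun a b h => Subtype.ext (hf a.2 b.2 h)
  rw [← card_filter_forall_mem_eq_self A]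
  refine card_bij' (fun σ _ => τ⁻¹ * σ) (fun σ _ => τ * σ) ?_ ?_ (by simp) (by simp) <;>
    simp only [mem_filter, mem_univ, true_and, Perm.mul_apply]
  · intro σ hσ a ha
    rw [hσ a ha, Perm.inv_eq_iff_eq]
    exact (hτ ⟨a, ha⟩).symm
  · intro σ hσ a ha
    rw [hσ a ha, hτ ⟨a, ha⟩]

end PermCount

section Shift

variable {G : Type*} [AddGroup G] [DecidableEq G]

theorem Finset.injOn_piecewise_add_id {M A : Finset G} {s : G}
    (h : ∀ x ∈ M, x + s ∈ A → x + s ∈ M) : Set.InjOn (M.piecewise (· + s) id) A := by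
  have hcross : ∀ x ∈ M, ∀ y ∈ A, y ∉ M → x + s ≠ y := fun x hx y hy hyM hxy =>
    hyM (hxy ▸ h x hx (hxy ▸ hy))
  intro x hx y hy hxy
  by_cases hxM : x ∈ M <;> by_cases hyM : y ∈ M <;>
    simp only [piecewise_eq_of_mem, piecewise_eq_of_notMem, hxM, hyM, id, not_false_eq_true]
      at hxy
  · exact add_right_cancel hxy
  · exact absurd hxy (hcross x hxM y hy hyM)
  · exact absurd hxy.symm (hcross y hyM x hx hxM)
  · exact hxy

variable {I J K T : Finset G} {s : G}

theorem forall_mem_eq_piecewise_add_iff (hs : s ≠ 0) (hIJ : Disjoint I J) (hKI : Disjoint K I)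
    (hKJ : Disjoint K J) (hT : T ⊆ K) (σ : G → G) :
    ((∀ i ∈ I, σ i = i) ∧ (∀ j ∈ J, σ j = j + s) ∧ (∀ k ∈ K, σ k = k ∨ σ k = k + s)) ∧
        {k ∈ K | σ k = k + s} = T ↔
      ∀ a ∈ I ∪ J ∪ K, σ a = (J ∪ T).piecewise (· + s) id a := by
  have hne : ∀ k, k + s ≠ k := fun k h => hs (add_eq_left.mp h)
  simp only [piecewise, id, mem_union]
  constructor
  · rintro ⟨⟨hI, hJ, hK⟩, rfl⟩ a ha
    grind [disjoint_left]
  · intro h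
    refine ⟨⟨fun i hi => ?_, fun j hj => ?_, fun k hk => ?_⟩, ?_⟩
    · grind [disjoint_left]
    · grind
    · grind
    · ext k
      grind [disjoint_left]

theorem card_perms_fix_shift_of_disjoint [Fintype G] (hs : s ≠ 0) (hIJ : Disjoint I J)
    (hIJs : Disjoint I (J.image (· + s))) (hKI : Disjoint K I) (hKJ : Disjoint K J)
    (hKIs : Disjoint K (I.image (· - s))) (hKJs : Disjoint K (J.image (· + s)))
    (hKKs : Disjoint K (K.image (· + s))) :
    #{σ : Perm G | (∀ i ∈ I, σ i = i) ∧ (∀ j ∈ J, σ j = j + s) ∧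
        (∀ k ∈ K, σ k = k ∨ σ k = k + s)} =
      2 ^ #K * (Fintype.card G - #(I ∪ J ∪ K))! := by
  rw [card_eq_sum_card_fiberwise (f := fun σ : Perm G => {k ∈ K | σ k = k + s})
      (t := K.powerset) fun σ _ => mem_powerset.mpr (filter_subset _ _),
    ← card_powerset, ← smul_eq_mul, ← sum_const]
  refine sum_congr rfl fun T hT => ?_
  have hTK := mem_powerset.mp hT
  rw [filter_filter]
  simp_rw [forall_mem_eq_piecewise_add_iff hs hIJ hKI hKJ hTK]
  refine Perm.card_filter_forall_mem_eq _ (injOn_piecewise_add_id fun x hx hxA => ?_)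
  simp only [mem_union] at hx hxA ⊢
  rcases hx with hxJ | hxT
  · have hxJs : x + s ∈ J.image (· + s) := mem_image_of_mem _ hxJ
    rcases hxA with (hxsI | hxsJ) | hxsK
    · exact absurd hxJs (disjoint_left.mp hIJs hxsI)
    · exact .inl hxsJ
    · exact absurd hxJs (disjoint_left.mp hKJs hxsK)
  · have hxK := hTK hxT
    rcases hxA with (hxsI | hxsJ) | hxsK
    · exact absurd (mem_image.mpr ⟨x + s, hxsI, add_sub_cancel_right x s⟩)
        (disjoint_left.mp hKIs hxK)
    · exact .inl hxsJ
    · exact absurd (mem_image_of_mem _ hxK) (disjoint_left.mp hKKs hxsK)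

end Shift

theorem card_perms_feasible (n : ℕ) [NeZero n] (s : ZMod n) (hs : s ≠ 0)
    (I J K : Finset (ZMod n)) (hcomp : Compatible I J s) (hfeas : Feasible I J K s) :
    (Finset.univ.filter
      (fun σ : Equiv.Perm (ZMod n) =>
        (∀ i ∈ I, σ i = i) ∧ (∀ j ∈ J, σ j = j + s) ∧
          (∀ k ∈ K, σ k = k ∨ σ k = k + s))).card =
    2 ^ K.card * Nat.factorial (n - (I ∪ J ∪ K).card) := by
  obtain ⟨hIJ, -, hIJs, -, -, -⟩ := hcomp
  obtain ⟨hKKs, hK⟩ := hfeas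
  simp only [disjoint_union_right] at hK
  obtain ⟨⟨⟨hKI, hKJ⟩, hKIs⟩, hKJs⟩ := hK
  rw [card_perms_fix_shift_of_disjoint hs hIJ hIJs hKI hKJ hKIs hKJs hKKs, ZMod.card]
end
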